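/- arXiv:1010.4717 — 3 statements merged into one kernel-verified Lean document; each statement's English description precedes it below -/
import Mathlib

section
/- Let (E_n) be a sequence of positive reals such that Φ(λ) = Σ_{n=1}^∞ exp(−λ E_n) converges for all λ > 0, together with the series defining its derivative. Then the function Ψ(λ) = −λ Φ'(λ)/Φ(λ) + log Φ(λ) has derivative Ψ'(λ) = −λ · Σ_{n>m} (E_n − E_m)² exp(−λ(E_n + E_m)) / Φ(λ)², and in particular Ψ'(λ) ≤ 0, so Ψ is antitone on (0,∞). -/
open Real

private lemma aux_mul_exp_le (a x : ℝ) (ha : 0 < a) (hx : 0 ≤ x) :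
    x * Real.exp (-a * x) ≤ 1 / a := by
  have h1 : a * x ≤ Real.exp (a * x) := by linarith [Real.add_one_le_exp (a * x)]
  have he : (0:ℝ) < Real.exp (a * x) := Real.exp_pos _
  have h2 : Real.exp (-a * x) = (Real.exp (a * x))⁻¹ := by
    rw [← Real.exp_neg]; ring_nf
  rw [h2]
  rw [le_div_iff₀ ha] at *
  have h3 : (a * x) * (Real.exp (a * x))⁻¹ ≤ Real.exp (a * x) * (Real.exp (a * x))⁻¹ :=
    mul_le_mul_of_nonneg_right h1 (inv_nonneg.2 he.le)
  rw [mul_inv_cancel₀ (ne_of_gt he)] at h3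
  nlinarith [h3]

private lemma aux_sq_summable (E : ℕ → ℝ) (hE : ∀ n, 0 < E n)
    (hsum' : ∀ l : ℝ, 0 < l → Summable (fun n => E n * Real.exp (-l * E n)))
    (l : ℝ) (hl : 0 < l) : Summable (fun n => E n ^ 2 * Real.exp (-l * E n)) := by
  have hl2 : 0 < l / 2 := by linarith
  refine Summable.of_nonneg_of_le (f := fun n => (2 / l) * (E n * Real.exp (-(l/2) * E n)))
    (fun n => by positivity) (fun n => ?_) ?_
  · 
    have hb : E n * Real.exp (-(l/2) * E n) ≤ 2 / l := by
      have := aux_mul_exp_le (l/2) (E n) hl2 (hE n).le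
      calc E n * Real.exp (-(l/2) * E n) ≤ 1 / (l/2) := this
        _ = 2 / l := by rw [one_div, inv_div]
    have hexp : Real.exp (-l * E n) = Real.exp (-(l/2) * E n) * Real.exp (-(l/2) * E n) := by
      rw [← Real.exp_add]; ring_nf
    have hnn : (0:ℝ) ≤ E n * Real.exp (-(l/2) * E n) := mul_nonneg (hE n).le (Real.exp_pos _).le
    calc E n ^ 2 * Real.exp (-l * E n)
        = (E n * Real.exp (-(l/2) * E n)) * (E n * Real.exp (-(l/2) * E n)) := by
          rw [hexp]; ring
      _ ≤ (2 / l) * (E n * Real.exp (-(l/2) * E n)) :=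
          mul_le_mul_of_nonneg_right hb hnn
  · exact (hsum' (l/2) hl2).mul_left _

private lemma aux_hasDerivAt_tsum (E c : ℕ → ℝ) (hE : ∀ n, 0 < E n) (hc : ∀ n, 0 ≤ c n)
    (h0 : ∀ m : ℝ, 0 < m → Summable (fun n => c n * Real.exp (-m * E n)))
    (h1 : ∀ m : ℝ, 0 < m → Summable (fun n => c n * E n * Real.exp (-m * E n)))
    (l : ℝ) (hl : 0 < l) :
    HasDerivAt (fun z => ∑' n, c n * Real.exp (-z * E n))
      (∑' n, -(c n * E n * Real.exp (-l * E n))) l := by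
  have hl2 : 0 < l / 2 := by linarith
  have hmem : l ∈ Set.Ioi (l / 2) := by simp [Set.mem_Ioi]; linarith
  refine hasDerivAt_tsum_of_isPreconnected
    (u := fun n => c n * E n * Real.exp (-(l/2) * E n))
    (h1 (l/2) hl2) isOpen_Ioi isPreconnected_Ioi
    (g := fun n y => c n * Real.exp (-y * E n))
    (g' := fun n y => -(c n * E n * Real.exp (-y * E n)))
    ?_ ?_ hmem (h0 l hl) hmem
  · intro n y _
    have hy : HasDerivAt (fun y : ℝ => -y * E n) (-(E n)) y := by
      simpa using ((hasDerivAt_id y).neg.mul_const (E n))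
    have := (hy.exp.const_mul (c n))
    refine this.congr_deriv ?_
    ring
  · intro n y hy
    rw [norm_neg, Real.norm_eq_abs, abs_of_nonneg
      (mul_nonneg (mul_nonneg (hc n) (hE n).le) (Real.exp_pos _).le)]
    have hyl : -y * E n ≤ -(l/2) * E n := by
      have : l / 2 ≤ y := le_of_lt hy
      nlinarith [(hE n).le]
    have := Real.exp_le_exp.2 hyl
    have hcE : 0 ≤ c n * E n := mul_nonneg (hc n) (hE n).le
    exact mul_le_mul_of_nonneg_left this hcE

private lemma aux_key' (E e : ℕ → ℝ) (hE : ∀ n, 0 < E n) (hepos : ∀ n, 0 < e n)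
    (h0 : Summable e)
    (h1 : Summable (fun n => E n * e n))
    (h2 : Summable (fun n => E n ^ 2 * e n)) :
    (∑' n, E n ^ 2 * e n) * (∑' n, e n)
      - (∑' n, E n * e n) * (∑' n, E n * e n)
      = ∑' p : ℕ × ℕ, (if p.2 < p.1 then
          (E p.1 - E p.2) ^ 2 * (e p.1 * e p.2) else 0) := by
  have hn0 : Summable (fun n => ‖e n‖) := by
    have : (fun n => ‖e n‖) = e := funext fun n => by
      rw [Real.norm_eq_abs, abs_of_nonneg (hepos n).le]
    rw [this]; exact h0
  have hn1 : Summable (fun n => ‖E n * e n‖) := by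
    have : (fun n => ‖E n * e n‖) = fun n => E n * e n := funext fun n => by
      rw [Real.norm_eq_abs, abs_of_nonneg (mul_nonneg (hE n).le (hepos n).le)]
    rw [this]; exact h1
  have hn2 : Summable (fun n => ‖E n ^ 2 * e n‖) := by
    have : (fun n => ‖E n ^ 2 * e n‖) = fun n => E n ^ 2 * e n := funext fun n => by
      rw [Real.norm_eq_abs, abs_of_nonneg (mul_nonneg (sq_nonneg _) (hepos n).le)]
    rw [this]; exact h2
  have hprod1 : (∑' n, E n ^ 2 * e n) * (∑' n, e n)
      = ∑' p : ℕ × ℕ, (E p.1 ^ 2 * e p.1) * e p.2 :=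
    tsum_mul_tsum_of_summable_norm hn2 hn0
  have hprod2 : (∑' n, E n * e n) * (∑' n, E n * e n)
      = ∑' p : ℕ × ℕ, (E p.1 * e p.1) * (E p.2 * e p.2) :=
    tsum_mul_tsum_of_summable_norm hn1 hn1
  have hF : Summable (fun p : ℕ × ℕ => (E p.1 ^ 2 * e p.1) * e p.2) :=
    summable_mul_of_summable_norm (f := fun n => E n ^ 2 * e n) (g := e) hn2 hn0
  have hG : Summable (fun p : ℕ × ℕ => (E p.1 * e p.1) * (E p.2 * e p.2)) :=
    summable_mul_of_summable_norm (f := fun n => E n * e n) (g := fun n => E n * e n) hn1 hn1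
  have hH : Summable (fun p : ℕ × ℕ =>
      (E p.1 ^ 2 * e p.1) * e p.2 - (E p.1 * e p.1) * (E p.2 * e p.2)) := hF.sub hG
  have hdiff : (∑' n, E n ^ 2 * e n) * (∑' n, e n)
      - (∑' n, E n * e n) * (∑' n, E n * e n)
      = ∑' p : ℕ × ℕ, ((E p.1 ^ 2 * e p.1) * e p.2 - (E p.1 * e p.1) * (E p.2 * e p.2)) := by
    rw [hprod1, hprod2, ← hF.tsum_sub hG]
  have hHswap : Summable (fun p : ℕ × ℕ =>
      (E p.2 ^ 2 * e p.2) * e p.1 - (E p.2 * e p.2) * (E p.1 * e p.1)) := by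
    have := ((Equiv.prodComm ℕ ℕ).summable_iff
      (f := fun p : ℕ × ℕ =>
        (E p.1 ^ 2 * e p.1) * e p.2 - (E p.1 * e p.1) * (E p.2 * e p.2))).2 hH
    exact this
  have hswap_eq : (∑' p : ℕ × ℕ, ((E p.2 ^ 2 * e p.2) * e p.1 - (E p.2 * e p.2) * (E p.1 * e p.1)))
      = ∑' p : ℕ × ℕ, ((E p.1 ^ 2 * e p.1) * e p.2 - (E p.1 * e p.1) * (E p.2 * e p.2)) :=
    (Equiv.prodComm ℕ ℕ).tsum_eq
      (fun p : ℕ × ℕ => (E p.1 ^ 2 * e p.1) * e p.2 - (E p.1 * e p.1) * (E p.2 * e p.2))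
  have hK : Summable (fun p : ℕ × ℕ => (E p.1 - E p.2) ^ 2 * (e p.1 * e p.2)) := by
    have h := hH.add hHswap
    have heq : (fun p : ℕ × ℕ =>
        ((E p.1 ^ 2 * e p.1) * e p.2 - (E p.1 * e p.1) * (E p.2 * e p.2))
        + ((E p.2 ^ 2 * e p.2) * e p.1 - (E p.2 * e p.2) * (E p.1 * e p.1)))
        = fun p : ℕ × ℕ => (E p.1 - E p.2) ^ 2 * (e p.1 * e p.2) := by
      funext p; ring
    rwa [heq] at h
  have hKsum : (∑' p : ℕ × ℕ, (E p.1 - E p.2) ^ 2 * (e p.1 * e p.2))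
      = 2 * ∑' p : ℕ × ℕ, ((E p.1 ^ 2 * e p.1) * e p.2 - (E p.1 * e p.1) * (E p.2 * e p.2)) := by
    have heq : (fun p : ℕ × ℕ => (E p.1 - E p.2) ^ 2 * (e p.1 * e p.2))
        = fun p : ℕ × ℕ =>
          ((E p.1 ^ 2 * e p.1) * e p.2 - (E p.1 * e p.1) * (E p.2 * e p.2))
          + ((E p.2 ^ 2 * e p.2) * e p.1 - (E p.2 * e p.2) * (E p.1 * e p.1)) := by
      funext p; ring
    rw [heq, hH.tsum_add hHswap, hswap_eq]; ring
  -- split the symmetric sum into the two strict triangles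
  have hKnn : ∀ p : ℕ × ℕ, 0 ≤ (E p.1 - E p.2) ^ 2 * (e p.1 * e p.2) := fun p =>
    mul_nonneg (sq_nonneg _) (mul_nonneg (hepos p.1).le (hepos p.2).le)
  have hf : Summable (fun p : ℕ × ℕ =>
      if p.2 < p.1 then (E p.1 - E p.2) ^ 2 * (e p.1 * e p.2) else 0) := by
    refine Summable.of_nonneg_of_le (fun p => ?_) (fun p => ?_) hK
    · split
      · exact hKnn p
      · exact le_refl 0
    · split
      · exact le_refl _
      · exact hKnn p
  have hg : Summable (fun p : ℕ × ℕ =>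
      if p.1 < p.2 then (E p.1 - E p.2) ^ 2 * (e p.1 * e p.2) else 0) := by
    refine Summable.of_nonneg_of_le (fun p => ?_) (fun p => ?_) hK
    · split
      · exact hKnn p
      · exact le_refl 0
    · split
      · exact le_refl _
      · exact hKnn p
  have hgf : (fun p : ℕ × ℕ =>
      if p.1 < p.2 then (E p.1 - E p.2) ^ 2 * (e p.1 * e p.2) else 0)
      = (fun p : ℕ × ℕ =>
      if p.2 < p.1 then (E p.1 - E p.2) ^ 2 * (e p.1 * e p.2) else 0) ∘
        (Equiv.prodComm ℕ ℕ) := by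
    funext p
    simp only [Function.comp_apply, Equiv.prodComm_apply, Prod.fst_swap, Prod.snd_swap]
    by_cases h : p.1 < p.2
    · rw [if_pos h]; exact Eq.symm ((if_pos h).trans (by ring))
    · rw [if_neg h]; exact (if_neg h).symm
  have hgsum : (∑' p : ℕ × ℕ, if p.1 < p.2 then (E p.1 - E p.2) ^ 2 * (e p.1 * e p.2) else 0)
      = ∑' p : ℕ × ℕ, if p.2 < p.1 then (E p.1 - E p.2) ^ 2 * (e p.1 * e p.2) else 0 := by
    rw [hgf]
    exact (Equiv.prodComm ℕ ℕ).tsum_eq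
      (fun p : ℕ × ℕ => if p.2 < p.1 then (E p.1 - E p.2) ^ 2 * (e p.1 * e p.2) else 0)
  have hfg : ∀ p : ℕ × ℕ, (E p.1 - E p.2) ^ 2 * (e p.1 * e p.2)
      = (if p.2 < p.1 then (E p.1 - E p.2) ^ 2 * (e p.1 * e p.2) else 0)
        + (if p.1 < p.2 then (E p.1 - E p.2) ^ 2 * (e p.1 * e p.2) else 0) := by
    intro p
    by_cases h1' : p.2 < p.1
    · have h2' : ¬ p.1 < p.2 := asymm h1'
      rw [if_pos h1', if_neg h2', add_zero]
    · by_cases h3' : p.1 < p.2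
      · rw [if_neg h1', if_pos h3', zero_add]
      · have heq : p.1 = p.2 := le_antisymm (not_lt.1 h1') (not_lt.1 h3')
        rw [if_neg h1', if_neg h3', add_zero, heq, sub_self]
        ring
  have hKf : (∑' p : ℕ × ℕ, (E p.1 - E p.2) ^ 2 * (e p.1 * e p.2))
      = 2 * ∑' p : ℕ × ℕ, (if p.2 < p.1 then (E p.1 - E p.2) ^ 2 * (e p.1 * e p.2) else 0) := by
    rw [tsum_congr hfg, hf.tsum_add hg, hgsum]; ring
  rw [hdiff]
  have := hKsum.symm.trans hKf
  linarith

private lemma aux_key (E : ℕ → ℝ) (hE : ∀ n, 0 < E n) (l : ℝ)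
    (h0 : Summable (fun n => Real.exp (-l * E n)))
    (h1 : Summable (fun n => E n * Real.exp (-l * E n)))
    (h2 : Summable (fun n => E n ^ 2 * Real.exp (-l * E n))) :
    (∑' n, E n ^ 2 * Real.exp (-l * E n)) * (∑' n, Real.exp (-l * E n))
      - (∑' n, E n * Real.exp (-l * E n)) * (∑' n, E n * Real.exp (-l * E n))
      = ∑' p : ℕ × ℕ, (if p.2 < p.1 then
          (E p.1 - E p.2) ^ 2 * Real.exp (-l * (E p.1 + E p.2)) else 0) := by
  have h := aux_key' E (fun n => Real.exp (-l * E n)) hE (fun n => Real.exp_pos _) h0 h1 h2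
  rw [h]
  apply tsum_congr
  intro p
  congr 1
  rw [← Real.exp_add]
  ring_nf

theorem entropy_antitone_with_deriv (E : ℕ → ℝ) (hE : ∀ n, 0 < E n)
    (hsum : ∀ l : ℝ, 0 < l → Summable (fun n => Real.exp (-l * E n)))
    (hsum' : ∀ l : ℝ, 0 < l → Summable (fun n => E n * Real.exp (-l * E n)))
    (Φ : ℝ → ℝ) (hΦ : Φ = fun l => ∑' n, Real.exp (-l * E n))
    (Φ' : ℝ → ℝ) (hΦ' : Φ' = fun l => -∑' n, E n * Real.exp (-l * E n))
    (Ψ : ℝ → ℝ) (hΨ : Ψ = fun l => -l * Φ' l / Φ l + Real.log (Φ l)) :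
    (∀ l : ℝ, 0 < l →
      HasDerivAt Ψ
        (-l * (∑' p : ℕ × ℕ, if p.2 < p.1 then
            (E p.1 - E p.2) ^ 2 * Real.exp (-l * (E p.1 + E p.2)) else 0) / (Φ l) ^ 2) l)
    ∧ (∀ l : ℝ, 0 < l →
        -l * (∑' p : ℕ × ℕ, if p.2 < p.1 then
            (E p.1 - E p.2) ^ 2 * Real.exp (-l * (E p.1 + E p.2)) else 0) / (Φ l) ^ 2 ≤ 0)
    ∧ AntitoneOn Ψ (Set.Ioi 0) := by
  have hsum'' : ∀ l : ℝ, 0 < l → Summable (fun n => E n ^ 2 * Real.exp (-l * E n)) :=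
    fun l hl => aux_sq_summable E hE hsum' l hl
  have hΦpos : ∀ l : ℝ, 0 < l → 0 < Φ l := by
    intro l hl
    rw [hΦ]
    exact Summable.tsum_pos (hsum l hl) (fun n => (Real.exp_pos _).le) 0 (Real.exp_pos _)
  -- derivative of Φ
  have hΦderiv : ∀ l : ℝ, 0 < l →
      HasDerivAt Φ (-∑' n, E n * Real.exp (-l * E n)) l := by
    intro l hl
    have h := aux_hasDerivAt_tsum E (fun _ => 1) hE (fun _ => zero_le_one)
      (fun m hm => by simpa using hsum m hm)
      (fun m hm => by simpa using hsum' m hm) l hl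
    have hfun : (fun z : ℝ => ∑' n, (1:ℝ) * Real.exp (-z * E n)) = Φ := by
      rw [hΦ]; funext z; simp
    have hval : (∑' n, -((1:ℝ) * E n * Real.exp (-l * E n)))
        = -∑' n, E n * Real.exp (-l * E n) := by
      rw [← tsum_neg]; simp
    rw [hfun, hval] at h
    exact h
  -- derivative of Φ'
  have hΦ'deriv : ∀ l : ℝ, 0 < l →
      HasDerivAt Φ' (∑' n, E n ^ 2 * Real.exp (-l * E n)) l := by
    intro l hl
    have h := aux_hasDerivAt_tsum E E hE (fun n => (hE n).le)
      (fun m hm => hsum' m hm)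
      (fun m hm => by
        have := hsum'' m hm
        have heq : (fun n => E n * E n * Real.exp (-m * E n))
            = fun n => E n ^ 2 * Real.exp (-m * E n) := by funext n; ring
        rw [heq]; exact this) l hl
    have h' := h.neg
    have hfun : (-fun z : ℝ => ∑' n, E n * Real.exp (-z * E n)) = Φ' := by rw [hΦ']; rfl
    have hval : -(∑' n, -(E n * E n * Real.exp (-l * E n)))
        = ∑' n, E n ^ 2 * Real.exp (-l * E n) := by
      rw [← tsum_neg]
      apply tsum_congr; intro n; ring
    rw [hfun, hval] at h'
    exact h'
  have key : ∀ l : ℝ, 0 < l →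
      (∑' n, E n ^ 2 * Real.exp (-l * E n)) * Φ l
        - (∑' n, E n * Real.exp (-l * E n)) * (∑' n, E n * Real.exp (-l * E n))
        = ∑' p : ℕ × ℕ, (if p.2 < p.1 then
            (E p.1 - E p.2) ^ 2 * Real.exp (-l * (E p.1 + E p.2)) else 0) := by
    intro l hl
    rw [hΦ]
    exact aux_key E hE l (hsum l hl) (hsum' l hl) (hsum'' l hl)
  have main : ∀ l : ℝ, 0 < l →
      HasDerivAt Ψ
        (-l * (∑' p : ℕ × ℕ, if p.2 < p.1 then
            (E p.1 - E p.2) ^ 2 * Real.exp (-l * (E p.1 + E p.2)) else 0) / (Φ l) ^ 2) l := by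
    intro l hl
    have hAne : Φ l ≠ 0 := (hΦpos l hl).ne'
    set B : ℝ := ∑' n, E n * Real.exp (-l * E n) with hB
    set C : ℝ := ∑' n, E n ^ 2 * Real.exp (-l * E n) with hC
    have hA' : HasDerivAt Φ (-B) l := hΦderiv l hl
    have hB' : HasDerivAt Φ' C l := hΦ'deriv l hl
    have hP : HasDerivAt (fun x => -x * Φ' x) (-1 * Φ' l + -l * C) l := by
      have hneg : HasDerivAt (fun x : ℝ => -x) (-1) l := by
        exact (hasDerivAt_id' l).neg
      exact hneg.mul hB'
    have hQ : HasDerivAt (fun x => -x * Φ' x / Φ x)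
        (((-1 * Φ' l + -l * C) * Φ l - (-l * Φ' l) * (-B)) / (Φ l) ^ 2) l :=
      hP.div hA' hAne
    have hL : HasDerivAt (fun x => Real.log (Φ x)) ((-B) / Φ l) l := hA'.log hAne
    have hsumD := hQ.add hL
    have hΨeq : Ψ = fun x => -x * Φ' x / Φ x + Real.log (Φ x) := hΨ
    rw [show (fun x => -x * Φ' x / Φ x) + (fun x => Real.log (Φ x)) = Ψ from hΨeq.symm] at hsumD
    refine hsumD.congr_deriv ?_
    have hΦ'l : Φ' l = -B := by rw [hΦ', hB]
    have hkey := key l hl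
    rw [← hC, ← hB] at hkey
    rw [← hkey, hΦ'l]
    field_simp
    ring
  refine ⟨main, ?_, ?_⟩
  · intro l hl
    have hS : 0 ≤ ∑' p : ℕ × ℕ, (if p.2 < p.1 then
        (E p.1 - E p.2) ^ 2 * Real.exp (-l * (E p.1 + E p.2)) else 0) := by
      apply tsum_nonneg
      intro p
      split
      · positivity
      · exact le_refl 0
    have hA2 : 0 < (Φ l) ^ 2 := pow_pos (hΦpos l hl) 2
    apply div_nonpos_of_nonpos_of_nonneg _ hA2.le
    rw [neg_mul]
    exact neg_nonpos.2 (mul_nonneg hl.le hS)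
  · apply antitoneOn_of_deriv_nonpos (convex_Ioi 0)
    · intro x hx
      exact ((main x hx).differentiableAt).continuousAt.continuousWithinAt
    · intro x hx
      rw [interior_Ioi] at hx
      exact ((main x hx).differentiableAt).differentiableWithinAt
    · intro x hx
      rw [interior_Ioi] at hx
      rw [(main x hx).deriv]
      have hS : 0 ≤ ∑' p : ℕ × ℕ, (if p.2 < p.1 then
          (E p.1 - E p.2) ^ 2 * Real.exp (-x * (E p.1 + E p.2)) else 0) := by
        apply tsum_nonneg
        intro p
        split
        · positivity
        · exact le_refl 0
      have hA2 : 0 < (Φ x) ^ 2 := pow_pos (hΦpos x hx) 2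
      apply div_nonpos_of_nonpos_of_nonneg _ hA2.le
      rw [neg_mul]
      exact neg_nonpos.2 (mul_nonneg hx.le hS)
end

section
/- Suppose (E_n) contains at least two distinct values, E_n > 0, and Φ(λ) = Σ_n exp(−λE_n) converges together with its term-wise derivative for all λ > 0. Then the entropy Ψ(λ) = −λΦ'(λ)/Φ(λ) + log Φ(λ) is strictly decreasing on (0,∞). -/
open Real

private lemma gibbs_key (E : ℕ → ℝ) (hE : ∀ n, 0 < E n)
    (hdistinct : ∃ n m, E n ≠ E m)
    (hsum : ∀ l : ℝ, 0 < l → Summable (fun n => Real.exp (-l * E n)))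
    (hsum' : ∀ l : ℝ, 0 < l → Summable (fun n => E n * Real.exp (-l * E n)))
    (a b : ℝ) (ha : 0 < a) (hb : 0 < b) (hab : a ≠ b) :
    (a - b) * ((∑' n, E n * Real.exp (-a * E n)) / (∑' n, Real.exp (-a * E n)))
      + (Real.log (∑' n, Real.exp (-a * E n)) - Real.log (∑' n, Real.exp (-b * E n))) < 0 := by
  set Sa := ∑' n, Real.exp (-a * E n) with hSa
  set Sb := ∑' n, Real.exp (-b * E n) with hSb
  set Ta := ∑' n, E n * Real.exp (-a * E n) with hTa
  have hSapos : 0 < Sa := Summable.tsum_pos (hsum a ha) (fun n => (Real.exp_pos _).le) 0 (Real.exp_pos _)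
  have hSbpos : 0 < Sb := Summable.tsum_pos (hsum b hb) (fun n => (Real.exp_pos _).le) 0 (Real.exp_pos _)
  set p : ℕ → ℝ := fun n => Real.exp (-a * E n) / Sa with hp
  set q : ℕ → ℝ := fun n => Real.exp (-b * E n) / Sb with hq
  have hppos : ∀ n, 0 < p n := fun n => div_pos (Real.exp_pos _) hSapos
  have hqpos : ∀ n, 0 < q n := fun n => div_pos (Real.exp_pos _) hSbpos
  have hpsum : Summable p := (hsum a ha).div_const _
  have hqsum : Summable q := (hsum b hb).div_const _
  have hptsum : ∑' n, p n = 1 := by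
    rw [hp, tsum_div_const]; exact div_self hSapos.ne'
  have hqtsum : ∑' n, q n = 1 := by
    rw [hq, tsum_div_const]; exact div_self hSbpos.ne'
  set c : ℝ := Real.log Sa - Real.log Sb with hc
  -- log (q n / p n) = (a - b) * E n + c
  have hlog : ∀ n, Real.log (q n / p n) = (a - b) * E n + c := by
    intro n
    rw [hq, hp]
    rw [Real.log_div (by positivity) (by positivity), Real.log_div (Real.exp_ne_zero _)
      (ne_of_gt hSapos), Real.log_div (Real.exp_ne_zero _) (ne_of_gt hSbpos),
      Real.log_exp, Real.log_exp]
    ring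
  set f : ℕ → ℝ := fun n => p n * ((a - b) * E n + c) with hf
  set g : ℕ → ℝ := fun n => q n - p n with hg
  have hle : ∀ n, f n ≤ g n := by
    intro n
    have h1 : Real.log (q n / p n) ≤ q n / p n - 1 := Real.log_le_sub_one_of_pos
      (div_pos (hqpos n) (hppos n))
    have := mul_le_mul_of_nonneg_left h1 (hppos n).le
    rw [hlog n] at this
    calc f n ≤ p n * (q n / p n - 1) := this
      _ = q n - p n := by field_simp [(hppos n).ne']
  -- strict at some index
  obtain ⟨n, m, hnm⟩ := hdistinct
  have hex : ∃ k, q k / p k ≠ 1 := by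
    by_contra h
    push_neg at h
    have h1 : ∀ k, (a - b) * E k + c = 0 := by
      intro k
      rw [← hlog k, h k, Real.log_one]
    have := sub_eq_zero.mpr ((h1 n).trans (h1 m).symm)
    have : (a - b) * (E n - E m) = 0 := by linarith [h1 n, h1 m]
    rcases mul_eq_zero.mp this with h' | h'
    · exact hab (by linarith [sub_eq_zero.mp h'])
    · exact hnm (sub_eq_zero.mp h')
  obtain ⟨k, hk⟩ := hex
  have hlt : f k < g k := by
    have h1 : Real.log (q k / p k) < q k / p k - 1 := Real.log_lt_sub_one_of_pos
      (div_pos (hqpos k) (hppos k)) hk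
    have := mul_lt_mul_of_pos_left h1 (hppos k)
    rw [hlog k] at this
    calc f k < p k * (q k / p k - 1) := this
      _ = q k - p k := by field_simp [(hppos k).ne']
  -- summability of f
  have hEp : Summable (fun n => E n * p n) := by
    have : (fun n => E n * p n) = fun n => (E n * Real.exp (-a * E n)) / Sa := by
      funext n; rw [hp]; ring
    rw [this]; exact (hsum' a ha).div_const _
  have hfsum : Summable f := by
    have : f = fun n => (a - b) * (E n * p n) + c * p n := by
      funext n; rw [hf]; ring
    rw [this]
    exact ((hEp.mul_left _).add (hpsum.mul_left _))
  have hgsum : Summable g := hqsum.sub hpsum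
  have hmain : ∑' n, f n < ∑' n, g n := Summable.tsum_lt_tsum hle hlt hfsum hgsum
  have hgts : ∑' n, g n = 0 := by
    rw [hg, Summable.tsum_sub hqsum hpsum, hptsum, hqtsum]; ring
  have hfts : ∑' n, f n = (a - b) * (Ta / Sa) + c := by
    have h1 : f = fun n => (a - b) * (E n * p n) + c * p n := by
      funext n; rw [hf]; ring
    rw [h1, Summable.tsum_add (hEp.mul_left (a-b)) (hpsum.mul_left c), tsum_mul_left, tsum_mul_left,
      hptsum]
    have h2 : ∑' n, E n * p n = Ta / Sa := by
      have : (fun n => E n * p n) = fun n => (E n * Real.exp (-a * E n)) / Sa := by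
        funext n; rw [hp]; ring
      rw [this, tsum_div_const]
    rw [h2]; ring
  rw [hfts, hgts] at hmain
  linarith

theorem entropy_strict_anti (E : ℕ → ℝ) (hE : ∀ n, 0 < E n)
    (hdistinct : ∃ n m, E n ≠ E m)
    (hsum : ∀ l : ℝ, 0 < l → Summable (fun n => Real.exp (-l * E n)))
    (hsum' : ∀ l : ℝ, 0 < l → Summable (fun n => E n * Real.exp (-l * E n)))
    (Φ : ℝ → ℝ) (hΦ : Φ = fun l => ∑' n, Real.exp (-l * E n))
    (Φ' : ℝ → ℝ) (hΦ' : Φ' = fun l => -∑' n, E n * Real.exp (-l * E n))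
    (Ψ : ℝ → ℝ) (hΨ : Ψ = fun l => -l * Φ' l / Φ l + Real.log (Φ l)) :
    StrictAntiOn Ψ (Set.Ioi 0) := by
  intro a ha b hb hab
  simp only [Set.mem_Ioi] at ha hb
  have hne : a ≠ b := ne_of_lt hab
  have key1 := gibbs_key E hE hdistinct hsum hsum' a b ha hb hne
  have key2 := gibbs_key E hE hdistinct hsum hsum' b a hb ha hne.symm
  set Sa := ∑' n, Real.exp (-a * E n) with hSa
  set Sb := ∑' n, Real.exp (-b * E n) with hSb
  set Ta := ∑' n, E n * Real.exp (-a * E n) with hTa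
  set Tb := ∑' n, E n * Real.exp (-b * E n) with hTb
  have hSapos : 0 < Sa := Summable.tsum_pos (hsum a ha) (fun n => (Real.exp_pos _).le) 0 (Real.exp_pos _)
  have hSbpos : 0 < Sb := Summable.tsum_pos (hsum b hb) (fun n => (Real.exp_pos _).le) 0 (Real.exp_pos _)
  set Ma := Ta / Sa with hMa
  set Mb := Tb / Sb with hMb
  -- key1 : (a-b) * Ma + (log Sa - log Sb) < 0
  -- key2 : (b-a) * Mb + (log Sb - log Sa) < 0
  have hMlt : Mb < Ma := by nlinarith
  have hΨa : Ψ a = a * Ma + Real.log Sa := by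
    rw [hΨ, hΦ, hΦ']
    simp only [← hSa, ← hTa]
    field_simp [hMa]
    rw [hMa]; field_simp
  have hΨb : Ψ b = b * Mb + Real.log Sb := by
    rw [hΨ, hΦ, hΦ']
    simp only [← hSb, ← hTb]
    field_simp [hMb]
    rw [hMb]; field_simp
  rw [hΨa, hΨb]
  -- from key2 : log Sb - log Sa < -(b-a) * Mb
  nlinarith
end

section
/- For real numbers r_1,…,r_k and distinct reals a, b, the determinant of the k×k matrix whose diagonal entries are r_i, whose strictly upper-triangular entries are all a, and whose strictly lower-triangular entries are all b, equals (a·f(b) − b·f(a))/(a − b), where f(x) = (r_1 − x)(r_2 − x)⋯(r_k − x). -/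
open Matrix Finset

private lemma det_rows_aux {n : ℕ} (A : Matrix (Fin n) (Fin n) ℝ) (v : Fin n → ℝ) (t : ℝ)
    (s : Finset (Fin n)) :
    (Matrix.of fun i j => if i ∈ s then A i j + t * v j else A i j).det
      = A.det + t * ∑ i ∈ s, (A.updateRow i v).det := by
  induction s using Finset.induction_on with
  | empty => simp only [Finset.notMem_empty, if_false, Finset.sum_empty, mul_zero, add_zero]; rfl
  | @insert x s hx ih =>
    set B : Matrix (Fin n) (Fin n) ℝ :=
      Matrix.of fun i j => if i ∈ s then A i j + t * v j else A i j with hB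
    have key : (Matrix.of fun i j => if i ∈ insert x s then A i j + t * v j else A i j)
        = B.updateRow x (B x + t • v) := by
      ext i j
      by_cases hix : i = x
      · subst hix
        simp [hB, updateRow_self, hx, Matrix.of_apply]
      · simp [hB, updateRow_ne hix, Finset.mem_insert, hix, Matrix.of_apply]
    rw [key, det_updateRow_add, det_updateRow_smul, updateRow_eq_self, ih]
    have hBx : (B.updateRow x v).det = (A.updateRow x v).det := by
      apply det_eq_of_forall_row_eq_smul_add_const (fun i => if i ∈ s then t else 0) x
      · simp [hx]
      · intro i j
        by_cases hix : i = x
        · subst hix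
          simp [updateRow_self, hx]
        · have hxv : (A.updateRow x v) x j = v j := by simp
          by_cases his : i ∈ s <;>
            simp [updateRow_ne hix, hB, his, hxv, Matrix.of_apply]
    rw [hBx, Finset.sum_insert hx]
    ring

private lemma det_rows_affine {n : ℕ} (A : Matrix (Fin n) (Fin n) ℝ) (v : Fin n → ℝ) :
    ∃ c : ℝ, ∀ t : ℝ, (Matrix.of fun i j => A i j + t * v j).det = A.det + t * c := by
  refine ⟨∑ i, (A.updateRow i v).det, fun t => ?_⟩
  have := det_rows_aux A v t Finset.univ
  simpa using this

theorem polya_szego_det (k : ℕ) (r : Fin k → ℝ) (a b : ℝ) (hab : a ≠ b)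
    (M : Matrix (Fin k) (Fin k) ℝ)
    (hM : M = Matrix.of fun i j => if i = j then r i else if (i : ℕ) < j then a else b)
    (f : ℝ → ℝ) (hf : f = fun x => ∏ i, (r i - x)) :
    M.det = (a * f b - b * f a) / (a - b) := by
  obtain ⟨c, hc⟩ := det_rows_affine M (fun _ => (1 : ℝ))
  have ha : (Matrix.of fun i j => M i j + (-a) * 1).det = f a := by
    have htri : (Matrix.of fun i j => M i j + (-a) * 1).BlockTriangular OrderDual.toDual := by
      intro i j hij
      have hij' : (i : ℕ) < j := hij
      have hine : i ≠ j := Fin.ne_of_lt hij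
      rw [hM]
      simp only [Matrix.of_apply, if_neg hine, if_pos hij']
      ring
    rw [Matrix.det_of_lowerTriangular _ htri, hf]
    apply Finset.prod_congr rfl
    intro i _
    simp [hM]
    ring
  have hb : (Matrix.of fun i j => M i j + (-b) * 1).det = f b := by
    have htri : (Matrix.of fun i j => M i j + (-b) * 1).BlockTriangular id := by
      intro i j hij
      have hij' : (j : ℕ) < i := hij
      have hine : i ≠ j := (Fin.ne_of_lt hij).symm
      have hnlt : ¬ ((i : ℕ) < j) := by omega
      rw [hM]
      simp only [Matrix.of_apply, if_neg hine, if_neg hnlt]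
      ring
    rw [Matrix.det_of_upperTriangular htri, hf]
    apply Finset.prod_congr rfl
    intro i _
    simp [hM]
    ring
  have ea : f a = M.det + (-a) * c := by rw [← ha, hc]
  have eb : f b = M.det + (-b) * c := by rw [← hb, hc]
  have hab' : a - b ≠ 0 := sub_ne_zero.mpr hab
  field_simp
  rw [ea, eb]
  ring
end
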